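/- arXiv:2412.13576 — 7 statements merged into one kernel-verified Lean document; each statement's English description precedes it below -/
import Mathlib

section
/- The Graver basis G(A), defined as the set of ⊑-minimal elements of Ker_ℤ(A) \ {0}, is a finite set. -/
/-!
The Graver basis is the set of minimal elements of `Ker_ℤ(A) \ {0}` for the conformal order `⊑`,
hence an antichain for `⊑`. Sending `x` to its positive and negative parts `(x⁺, x⁻) ∈ ℕ^{2n}`
turns the componentwise order into a relation finer than `⊑`, so Dickson's lemma makes `⊑` a well
quasi-order on `ℤ^n`, and antichains of a well quasi-order are finite.
-/

def ConformalLE {ι : Type*} (x y : ι → ℤ) : Prop :=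
  ∀ i, 0 ≤ x i * y i ∧ |x i| ≤ |y i|

def Int.posNegParts (a : ℤ) : ℕ × ℕ := (a.toNat, (-a).toNat)

theorem Int.mul_nonneg_and_abs_le_of_posNegParts_le {a b : ℤ}
    (h : a.posNegParts ≤ b.posNegParts) : 0 ≤ a * b ∧ |a| ≤ |b| := by
  obtain ⟨hpos, hneg⟩ : a.toNat ≤ b.toNat ∧ (-a).toNat ≤ (-b).toNat := h
  rcases le_total 0 b with hb | hb
  · obtain ⟨ha, hab⟩ : 0 ≤ a ∧ a ≤ b := by omega
    exact ⟨mul_nonneg ha hb, abs_le_abs_of_nonneg ha hab⟩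
  · obtain ⟨ha, hba⟩ : a ≤ 0 ∧ b ≤ a := by omega
    exact ⟨mul_nonneg_of_nonpos_of_nonpos ha hb, abs_le_abs_of_nonpos ha hba⟩

theorem WellQuasiOrdered.of_map_rel {α β : Type*} {r : α → α → Prop} {s : β → β → Prop}
    (hs : WellQuasiOrdered s) (f : α → β) (hf : ∀ a b, s (f a) (f b) → r a b) :
    WellQuasiOrdered r := fun g ↦
  let ⟨m, n, hmn, h⟩ := hs (f ∘ g)
  ⟨m, n, hmn, hf _ _ h⟩

theorem wellQuasiOrdered_conformalLE (ι : Type*) [Finite ι] :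
    WellQuasiOrdered (@ConformalLE ι) :=
  (wellQuasiOrdered_le (α := ι → ℕ × ℕ)).of_map_rel (fun x i ↦ (x i).posNegParts)
    fun _ _ h i ↦ Int.mul_nonneg_and_abs_le_of_posNegParts_le (h i)

theorem finite_conformalLE_minimals {ι : Type*} [Finite ι] (S : Set (ι → ℤ)) :
    {g | g ∈ S ∧ ∀ h ∈ S, ConformalLE h g → h = g}.Finite :=
  IsAntichain.finite_of_wellQuasiOrdered
    (fun h hh _ hg hne hhg ↦ hne (hg.2 h hh.1 hhg)) (wellQuasiOrdered_conformalLE ι)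

/-- The Graver basis `G(A)`, the set of `⊑`-minimal elements of `Ker_ℤ(A) \ {0}`,
is finite. -/
theorem graver_basis_finite (m n : ℕ) (A : Matrix (Fin m) (Fin n) ℤ) :
    {g : Fin n → ℤ | A.mulVec g = 0 ∧ g ≠ 0 ∧
      ∀ h : Fin n → ℤ, A.mulVec h = 0 → h ≠ 0 →
        (∀ i, 0 ≤ h i * g i ∧ |h i| ≤ |g i|) → h = g}.Finite :=
  (finite_conformalLE_minimals {g : Fin n → ℤ | A.mulVec g = 0 ∧ g ≠ 0}).subset
    fun _ ⟨hA, hne, hmin⟩ ↦ ⟨⟨hA, hne⟩, fun h hh ↦ hmin h hh.1 hh.2⟩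
end

section
/- With B as above and s ∈ {−1,1}^n, the map z ↦ Bz is a bijection from the Hilbert basis H(R_s) onto the Hilbert basis H(𝕆_s ∩ Ker(A)), where the Hilbert basis of a pointed rational cone C is H(C) := {x ∈ C ∩ ℤ^k \ {0} : there do not exist y, z ∈ C ∩ ℤ^k \ {0} with x = y + z}. -/
/-!
Split the unimodular `C` as `(C₁ | B)` along its first `m` columns. Then `(x, z) ↦ C₁ x + B z`
is a bijection `ℤ^m × ℤ^d → ℤ^n`, so `z ↦ B z` is injective; and since `A C₁ = H` is lower
triangular with nonzero diagonal while `A B = 0`, the vector `C₁ x + B z` lies in `Ker A` exactly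
when `x = 0`. Hence `z ↦ B z` is an additive isomorphism of `ℤ^d` onto `Ker_ℤ A`, carrying the
lattice points of `R_s` onto those of `𝕆_s ∩ Ker A`. An injective additive map preserves being
nonzero and being a sum of two nonzero points, so it matches the Hilbert bases.
-/

open Function Matrix

def hilbertBasis {M : Type*} [Add M] [Zero M] (S : Set M) : Set M :=
  {x | x ∈ S ∧ x ≠ 0 ∧ ¬∃ u v, u ∈ S ∧ u ≠ 0 ∧ v ∈ S ∧ v ≠ 0 ∧ x = u + v}

theorem bijOn_hilbertBasis_preimage {M N : Type*} [AddZeroClass M] [AddZeroClass N]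
    (f : M →+ N) (hf : Injective f) {T : Set N} (hT : T ⊆ Set.range f) :
    Set.BijOn f (hilbertBasis (f ⁻¹' T)) (hilbertBasis T) := by
  refine ⟨?_, hf.injOn, ?_⟩
  · rintro x ⟨hxT, hx0, hx_irred⟩
    refine ⟨hxT, (map_ne_zero_iff f hf).2 hx0, ?_⟩
    rintro ⟨_, _, hu, hu0, hv, hv0, hx⟩
    obtain ⟨u, rfl⟩ := hT hu
    obtain ⟨v, rfl⟩ := hT hv
    rw [← map_add] at hx
    exact hx_irred ⟨u, v, hu, (map_ne_zero_iff f hf).1 hu0, hv, (map_ne_zero_iff f hf).1 hv0, hf hx⟩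
  · rintro y ⟨hyT, hy0, hy_irred⟩
    obtain ⟨x, rfl⟩ := hT hyT
    refine ⟨x, ⟨hyT, (map_ne_zero_iff f hf).1 hy0, ?_⟩, rfl⟩
    rintro ⟨u, v, hu, hu0, hv, hv0, rfl⟩
    exact hy_irred ⟨f u, f v, hu, (map_ne_zero_iff f hf).2 hu0, hv, (map_ne_zero_iff f hf).2 hv0,
      map_add f u v⟩

namespace Matrix

variable {R : Type*} {l m n o : Type*}

theorem mulVec_injective_of_isLowerTriangular [CommRing R] [IsDomain R] [Fintype m]
    [DecidableEq m] [LinearOrder m] {H : Matrix m m R} (hH : H.IsLowerTriangular)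
    (hdiag : ∀ i, H i i ≠ 0) : Injective H.mulVec :=
  mulVec_injective_of_det_ne_zero <| by
    rw [det_of_isLowerTriangular H hH]
    exact Finset.prod_ne_zero_iff.2 fun i _ => hdiag i

variable [Semiring R] [Fintype l] [Fintype n] [Fintype o]

theorem mulVec_submatrix_id_bijective {M : Matrix m n R} (e : o ≃ n) (hM : Bijective M.mulVec) :
    Bijective (M.submatrix id e).mulVec := by
  have : (M.submatrix id e).mulVec = M.mulVec ∘ e.arrowCongr (Equiv.refl R) :=
    funext fun v => submatrix_mulVec_equiv M v id e
  rw [this]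
  exact hM.comp (e.arrowCongr (Equiv.refl R)).bijective

theorem mulVec_injective_of_fromCols {C : Matrix m l R} {B : Matrix m o R}
    (h : Injective (fromCols C B).mulVec) : Injective B.mulVec := fun z z' hz =>
  congrArg (· ∘ Sum.inr) <| @h (Sum.elim 0 z) (Sum.elim 0 z') <| by
    simp only [fromCols_mulVec_sumElim, hz]

theorem range_mulVec_eq_ker_of_fromCols (A : Matrix m n R) {C : Matrix n l R} {B : Matrix n o R}
    (hCB : Surjective (fromCols C B).mulVec) (hAC : Injective (A * C).mulVec) (hAB : A * B = 0) :
    Set.range B.mulVec = {g | A *ᵥ g = 0} := by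
  ext g
  constructor
  · rintro ⟨z, rfl⟩
    simp [mulVec_mulVec, hAB]
  · intro hg
    obtain ⟨w, rfl⟩ := hCB g
    have hw : w ∘ Sum.inl = 0 := hAC <| by
      simpa [mulVec_add, mulVec_mulVec, hAB] using hg
    exact ⟨w ∘ Sum.inr, by simp [hw]⟩

end Matrix

/-- `z ↦ Bz` is a bijection from the Hilbert basis of `R_s` onto the Hilbert
basis of `𝕆_s ∩ Ker(A)` (nonzero integer points of the cone that are not the
sum of two nonzero integer points of the cone). -/
theorem hilbert_basis_bijection (m n : ℕ) (hmn : m ≤ n)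
    (A : Matrix (Fin m) (Fin n) ℤ)
    (C : Matrix (Fin n) (Fin n) ℤ) (hC : C.det = 1 ∨ C.det = -1)
    (H : Matrix (Fin m) (Fin m) ℤ)
    (hH_tri : ∀ i j : Fin m, (i : ℕ) < (j : ℕ) → H i j = 0)
    (hH_diag : ∀ i : Fin m, 0 < H i i)
    (hAC : A * C = Matrix.of (fun i (j : Fin n) =>
      if h : (j : ℕ) < m then H i ⟨j, h⟩ else 0))
    (B : Matrix (Fin n) (Fin (n - m)) ℤ)
    (hB : ∀ (j : Fin n) (k : Fin (n - m)),
      B j k = C j ⟨m + k, by have := k.isLt; omega⟩)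
    (s : Fin n → ℤ) :
    Set.BijOn (B.mulVec : (Fin (n - m) → ℤ) → (Fin n → ℤ))
      {z : Fin (n - m) → ℤ | (∀ i, 0 ≤ s i * B.mulVec z i) ∧ z ≠ 0 ∧
        ¬∃ u v : Fin (n - m) → ℤ,
          (∀ i, 0 ≤ s i * B.mulVec u i) ∧ u ≠ 0 ∧
          (∀ i, 0 ≤ s i * B.mulVec v i) ∧ v ≠ 0 ∧ z = u + v}
      {g : Fin n → ℤ | A.mulVec g = 0 ∧ (∀ i, 0 ≤ s i * g i) ∧ g ≠ 0 ∧
        ¬∃ u v : Fin n → ℤ,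
          (A.mulVec u = 0 ∧ (∀ i, 0 ≤ s i * u i) ∧ u ≠ 0) ∧
          (A.mulVec v = 0 ∧ (∀ i, 0 ≤ s i * v i) ∧ v ≠ 0) ∧ g = u + v} := by
  let e : Fin m ⊕ Fin (n - m) ≃ Fin n := finSumFinEquiv.trans (finCongr (by omega))
  have hCe : C.submatrix id e = fromCols (C.submatrix id (e ∘ Sum.inl)) B := by
    ext j (i | k)
    · rfl
    · exact (hB j k).symm
  have hACe : A * C.submatrix id e = fromCols H 0 := by
    change (A * C).submatrix id e = _
    rw [hAC]
    ext i (j | k) <;> simp [e]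
  rw [hCe, mul_fromCols] at hACe
  obtain ⟨hAC₁, hAB⟩ := fromCols_inj hACe
  have hCe_bij : Bijective (fromCols (C.submatrix id (e ∘ Sum.inl)) B).mulVec := by
    have hC_unit : IsUnit C := (isUnit_iff_isUnit_det C).2 (by rcases hC with h | h <;> simp [h])
    rw [← hCe]
    exact mulVec_submatrix_id_bijective e
      ⟨mulVec_injective_of_isUnit hC_unit, mulVec_surjective_iff_isUnit.2 hC_unit⟩
  have hH_inj : Injective H.mulVec :=
    mulVec_injective_of_isLowerTriangular hH_tri fun i => (hH_diag i).ne'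
  have hrange := range_mulVec_eq_ker_of_fromCols A hCe_bij.2 (hAC₁ ▸ hH_inj) hAB
  have key := bijOn_hilbertBasis_preimage B.mulVecLin.toAddMonoidHom
    (mulVec_injective_of_fromCols hCe_bij.1) (T := {g | A *ᵥ g = 0 ∧ ∀ i, 0 ≤ s i * g i})
    (hrange ▸ fun g hg => hg.1)
  have hpre : B.mulVecLin.toAddMonoidHom ⁻¹' {g | A *ᵥ g = 0 ∧ ∀ i, 0 ≤ s i * g i} =
      {z | ∀ i, 0 ≤ s i * (B *ᵥ z) i} := by
    ext z
    simp [mulVec_mulVec, hAB]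
  rw [hpre] at key
  simpa only [hilbertBasis, Set.mem_ofPred_eq, and_assoc, LinearMap.toAddMonoidHom_coe,
    coe_mulVecLin] using key
end

section
/- Every nonzero g ∈ Ker_ℤ(A) can be written as a finite non-negative integer combination g = Σ_i λ_i g_i with λ_i ∈ ℤ_{≥0}, g_i ∈ G(A), and g_i ⊑ g for all i (sign-compatible Graver decomposition). -/
private lemma coord_trans (a b c : ℤ) (h1 : 0 ≤ a * b) (h2 : |a| ≤ |b|)
    (h3 : 0 ≤ b * c) (h4 : |b| ≤ |c|) : 0 ≤ a * c ∧ |a| ≤ |c| := by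
  rcases abs_cases a with ⟨ha, ha'⟩ | ⟨ha, ha'⟩ <;>
  rcases abs_cases b with ⟨hb, hb'⟩ | ⟨hb, hb'⟩ <;>
  rcases abs_cases c with ⟨hc, hc'⟩ | ⟨hc, hc'⟩ <;>
  constructor <;> nlinarith

private lemma coord_sub (a b : ℤ) (h1 : 0 ≤ a * b) (h2 : |a| ≤ |b|) :
    0 ≤ (b - a) * b ∧ |b - a| ≤ |b| := by
  rcases abs_cases a with ⟨ha, ha'⟩ | ⟨ha, ha'⟩ <;>
  rcases abs_cases b with ⟨hb, hb'⟩ | ⟨hb, hb'⟩ <;>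
  rcases abs_cases (b - a) with ⟨hc, hc'⟩ | ⟨hc, hc'⟩ <;>
  constructor <;> nlinarith

private lemma coord_lt (a b : ℤ) (h1 : 0 ≤ a * b) (h2 : |a| ≤ |b|) (h3 : a ≠ b) :
    a.natAbs < b.natAbs := by
  have habs : |a| < |b| := by
    rcases lt_or_eq_of_le h2 with h | h
    · exact h
    · rcases abs_eq_abs.mp h with rfl | rfl
      · exact absurd rfl h3
      · have hb : b = 0 := by nlinarith
        subst hb; simp at h3
  have := habs
  rw [Int.abs_eq_natAbs, Int.abs_eq_natAbs] at this
  exact_mod_cast this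

private lemma measure_lt {n : ℕ} (h g : Fin n → ℤ)
    (hsub : ∀ j, 0 ≤ h j * g j ∧ |h j| ≤ |g j|) (hne : h ≠ g) :
    ∑ j, (h j).natAbs < ∑ j, (g j).natAbs := by
  have hj : ∃ j, h j ≠ g j := by
    by_contra hc; push_neg at hc; exact hne (funext hc)
  obtain ⟨j, hj⟩ := hj
  refine Finset.sum_lt_sum (fun i _ => ?_) ⟨j, Finset.mem_univ j, ?_⟩
  · by_cases hij : h i = g i
    · rw [hij]
    · exact le_of_lt (coord_lt _ _ (hsub i).1 (hsub i).2 hij)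
  · exact coord_lt _ _ (hsub j).1 (hsub j).2 hj

private lemma graver_aux (m n : ℕ) (A : Matrix (Fin m) (Fin n) ℤ) :
    ∀ N : ℕ, ∀ g : Fin n → ℤ, (∑ j, (g j).natAbs) = N → A.mulVec g = 0 → g ≠ 0 →
    ∃ (r : ℕ) (lam : Fin r → ℕ) (gs : Fin r → (Fin n → ℤ)),
      (∀ i, A.mulVec (gs i) = 0 ∧ gs i ≠ 0 ∧
        ∀ h : Fin n → ℤ, A.mulVec h = 0 → h ≠ 0 →
          (∀ j, 0 ≤ h j * gs i j ∧ |h j| ≤ |gs i j|) → h = gs i) ∧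
      (∀ i, ∀ j, 0 ≤ gs i j * g j ∧ |gs i j| ≤ |g j|) ∧
      g = ∑ i, (lam i : ℤ) • gs i := by
  intro N
  induction N using Nat.strong_induction_on with
  | _ N IH =>
    intro g hN hker hg0
    by_cases hmin : ∀ h : Fin n → ℤ, A.mulVec h = 0 → h ≠ 0 →
        (∀ j, 0 ≤ h j * g j ∧ |h j| ≤ |g j|) → h = g
    · refine ⟨1, fun _ => 1, fun _ => g, fun i => ⟨hker, hg0, hmin⟩,
        fun i j => ⟨mul_self_nonneg _, le_refl _⟩, ?_⟩
      simp
    · push_neg at hmin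
      obtain ⟨h, hk, h0, hsub, hne⟩ := hmin
      have hgh_ker : A.mulVec (g - h) = 0 := by
        rw [Matrix.mulVec_sub, hker, hk, sub_zero]
      have hgh0 : g - h ≠ 0 := sub_ne_zero.mpr (Ne.symm hne)
      have hsub2 : ∀ j, 0 ≤ (g - h) j * g j ∧ |(g - h) j| ≤ |g j| := by
        intro j
        have := coord_sub (h j) (g j) (hsub j).1 (hsub j).2
        simpa using this
      have hghne : g - h ≠ g := by
        intro hc
        apply h0
        have : g - h - g = g - g := by rw [hc]
        simpa using this.symm
      have m1 : ∑ j, (h j).natAbs < N := hN ▸ measure_lt h g hsub hne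
      have m2 : ∑ j, ((g - h) j).natAbs < N := hN ▸ measure_lt (g - h) g hsub2 hghne
      obtain ⟨r1, lam1, gs1, H1a, H1b, H1c⟩ := IH _ m1 h rfl hk h0
      obtain ⟨r2, lam2, gs2, H2a, H2b, H2c⟩ := IH _ m2 (g - h) rfl hgh_ker hgh0
      refine ⟨r1 + r2, Fin.append lam1 lam2, Fin.append gs1 gs2, ?_, ?_, ?_⟩
      · intro i
        refine Fin.addCases (fun i => ?_) (fun i => ?_) i <;>
          simp only [Fin.append_left, Fin.append_right]
        · exact H1a i
        · exact H2a i
      · intro i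
        refine Fin.addCases (fun i => ?_) (fun i => ?_) i <;>
          intro j <;> simp only [Fin.append_left, Fin.append_right]
        · exact coord_trans _ _ _ ((H1b i j).1) ((H1b i j).2) ((hsub j).1) ((hsub j).2)
        · exact coord_trans _ _ _ ((H2b i j).1) ((H2b i j).2) ((hsub2 j).1) ((hsub2 j).2)
      · rw [Fin.sum_univ_add]
        simp only [Fin.append_left, Fin.append_right]
        rw [← H1c, ← H2c]
        abel

/-- Sign-compatible Graver decomposition: every nonzero `g ∈ Ker_ℤ(A)` is a
non-negative integer combination of Graver basis elements `gᵢ ⊑ g`. -/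
theorem graver_decomposition (m n : ℕ) (A : Matrix (Fin m) (Fin n) ℤ)
    (g : Fin n → ℤ) (hg : A.mulVec g = 0) (hg0 : g ≠ 0) :
    ∃ (r : ℕ) (lam : Fin r → ℕ) (gs : Fin r → (Fin n → ℤ)),
      (∀ i, A.mulVec (gs i) = 0 ∧ gs i ≠ 0 ∧
        ∀ h : Fin n → ℤ, A.mulVec h = 0 → h ≠ 0 →
          (∀ j, 0 ≤ h j * gs i j ∧ |h j| ≤ |gs i j|) → h = gs i) ∧
      (∀ i, ∀ j, 0 ≤ gs i j * g j ∧ |gs i j| ≤ |g j|) ∧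
      g = ∑ i, (lam i : ℤ) • gs i := by
  exact graver_aux m n A _ g rfl hg hg0
end

section
/- If x, x̄ ∈ S := {x ∈ ℤ^n : Ax = b, l ≤ x ≤ u} and d := x − x̄ = Σ_{i=1}^r λ_i g_i with λ_i ∈ ℤ_{≥0}, g_i ∈ Ker_ℤ(A), and g_i ⊑ d, then for any integers μ_i with 0 ≤ μ_i ≤ λ_i, the point x̄ + Σ_i μ_i g_i also lies in S (bounded trajectory property). -/
/-- Bounded trajectory: if `x, x̄ ∈ S` and `x - x̄ = Σ λᵢ gᵢ` with `λᵢ ≥ 0`,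
`gᵢ ∈ Ker_ℤ(A)`, `gᵢ ⊑ x - x̄`, then any partial combination `x̄ + Σ μᵢ gᵢ`
with `0 ≤ μᵢ ≤ λᵢ` also lies in `S`. -/
theorem bounded_trajectory (m n : ℕ) (A : Matrix (Fin m) (Fin n) ℤ)
    (b : Fin m → ℤ) (l u : Fin n → ℤ)
    (x xbar : Fin n → ℤ)
    (hx : A.mulVec x = b ∧ ∀ i, l i ≤ x i ∧ x i ≤ u i)
    (hxbar : A.mulVec xbar = b ∧ ∀ i, l i ≤ xbar i ∧ xbar i ≤ u i)
    (r : ℕ) (lam : Fin r → ℤ) (hlam : ∀ i, 0 ≤ lam i)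
    (gs : Fin r → (Fin n → ℤ))
    (hker : ∀ i, A.mulVec (gs i) = 0)
    (hsq : ∀ i, ∀ j, 0 ≤ gs i j * (x - xbar) j ∧ |gs i j| ≤ |(x - xbar) j|)
    (hdec : x - xbar = ∑ i, lam i • gs i)
    (mu : Fin r → ℤ) (hmu : ∀ i, 0 ≤ mu i ∧ mu i ≤ lam i) :
    A.mulVec (xbar + ∑ i, mu i • gs i) = b ∧
      ∀ j, l j ≤ (xbar + ∑ i, mu i • gs i) j ∧
        (xbar + ∑ i, mu i • gs i) j ≤ u j := by
  constructor
  · have hsum : A.mulVec (∑ i, mu i • gs i) = 0 := by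
      have h := map_sum A.mulVecLin (fun i => mu i • gs i) Finset.univ
      simp only [Matrix.mulVecLin_apply] at h
      rw [h]
      refine Finset.sum_eq_zero fun i _ => ?_
      rw [Matrix.mulVec_smul, hker, smul_zero]
    rw [Matrix.mulVec_add, hxbar.1, hsum, add_zero]
  · intro j
    have hdj : x j - xbar j = ∑ i, lam i * gs i j := by
      have := congrFun hdec j
      simpa [Finset.sum_apply] using this
    have hsq' : ∀ i, 0 ≤ gs i j * (x j - xbar j) ∧ |gs i j| ≤ |x j - xbar j| := by
      intro i; simpa using hsq i j
    set s : ℤ := ∑ i, mu i * gs i j with hs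
    have hval : (xbar + ∑ i, mu i • gs i) j = xbar j + s := by
      simp [hs, Finset.sum_apply]
    rw [hval]
    rcases le_or_gt 0 (x j - xbar j) with hd | hd
    · have hg : ∀ i, 0 ≤ gs i j := by
        intro i
        rcases lt_or_eq_of_le hd with hpos | heq
        · nlinarith [(hsq' i).1]
        · have h0 : |gs i j| ≤ 0 := by simpa [← heq] using (hsq' i).2
          have := abs_nonpos_iff.mp h0
          omega
      have h0 : 0 ≤ s := Finset.sum_nonneg fun i _ => mul_nonneg (hmu i).1 (hg i)
      have h1 : s ≤ x j - xbar j := by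
        rw [hdj]
        exact Finset.sum_le_sum fun i _ => mul_le_mul_of_nonneg_right (hmu i).2 (hg i)
      have := (hx.2 j); have := (hxbar.2 j)
      constructor <;> omega
    · have hg : ∀ i, gs i j ≤ 0 := by
        intro i; nlinarith [(hsq' i).1]
      have h0 : s ≤ 0 := Finset.sum_nonpos fun i _ => mul_nonpos_of_nonneg_of_nonpos (hmu i).1 (hg i)
      have h1 : x j - xbar j ≤ s := by
        rw [hdj]
        exact Finset.sum_le_sum fun i _ => mul_le_mul_of_nonpos_right (hmu i).2 (hg i)
      have := (hx.2 j); have := (hxbar.2 j)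
      constructor <;> omega
end

section
/- Let f : ℝ → ℝ be convex, let a ∈ ℝ, and let g_1, …, g_r ∈ ℝ be real numbers all of the same sign (all ≥ 0 or all ≤ 0). Then f(a + Σ_i g_i) − f(a) ≥ Σ_i (f(a + g_i) − f(a)). -/
/-!
For same-sign `u`, `v` the points `a + u` and `a + v` lie between `a` and `a + u + v` and have
the same sum, so convexity gives `f (a + u) + f (a + v) ≤ f a + f (a + u + v)`. Hence the increment
`x ↦ f (a + x) - f a` vanishes at `0` and is superadditive on each closed half-line.
-/

open Finset

theorem Finset.sum_le_of_superadditive_on_pred {ι M N : Type*} [AddCommMonoid M]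
    [AddCommMonoid N] [PartialOrder N] [IsOrderedAddMonoid N] (f : M → N) (p : M → Prop)
    (h_zero : 0 ≤ f 0) (h_add : ∀ x y, p x → p y → f x + f y ≤ f (x + y))
    (hp_add : ∀ x y, p x → p y → p (x + y)) (g : ι → M) {s : Finset ι}
    (hs : ∀ i ∈ s, p (g i)) : ∑ i ∈ s, f (g i) ≤ f (∑ i ∈ s, g i) :=
  le_sum_of_subadditive_on_pred (N := Nᵒᵈ) (OrderDual.toDual ∘ f) p h_zero h_add hp_add g hs

section Quadrangle

variable {𝕜 : Type*} [Field 𝕜] [LinearOrder 𝕜] [IsStrictOrderedRing 𝕜] {s : Set 𝕜}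
  {f : 𝕜 → 𝕜} {a u v : 𝕜}

theorem ConvexOn.map_add_add_map_add_le_of_nonneg (hf : ConvexOn 𝕜 s f) (ha : a ∈ s)
    (hauv : a + u + v ∈ s) (hu : 0 ≤ u) (hv : 0 ≤ v) :
    f (a + u) + f (a + v) ≤ f a + f (a + u + v) := by
  rcases hu.eq_or_lt with rfl | hu
  · simp
  rcases hv.eq_or_lt with rfl | hv
  · simp [add_comm]
  have hau := hf.secant_mono_aux1 ha hauv (lt_add_of_pos_right a hu) (by linarith)
  have hav := hf.secant_mono_aux1 ha hauv (lt_add_of_pos_right a hv) (by linarith)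
  have : (u + v) * (f (a + u) + f (a + v)) ≤ (u + v) * (f a + f (a + u + v)) := by
    linarith
  exact le_of_mul_le_mul_left this (by positivity)

theorem ConvexOn.map_add_add_map_add_le_of_nonpos (hf : ConvexOn 𝕜 s f) (ha : a ∈ s)
    (hauv : a + u + v ∈ s) (hu : u ≤ 0) (hv : v ≤ 0) :
    f (a + u) + f (a + v) ≤ f a + f (a + u + v) := by
  -- the nonnegative case, read from the other endpoint `a + u + v`
  have := hf.map_add_add_map_add_le_of_nonneg hauv (by simpa) (neg_nonneg.2 hv) (neg_nonneg.2 hu)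
  rw [add_comm (f a)]
  convert this using 3 <;> ring

end Quadrangle

/-- Superadditivity of increments of a convex function along same-sign steps:
`f(a + Σ gᵢ) - f(a) ≥ Σ (f(a + gᵢ) - f(a))`. -/
theorem convex_superadditive_increments (f : ℝ → ℝ)
    (hf : ConvexOn ℝ Set.univ f) (a : ℝ) (r : ℕ) (g : Fin r → ℝ)
    (hsign : (∀ i, 0 ≤ g i) ∨ (∀ i, g i ≤ 0)) :
    ∑ i, (f (a + g i) - f a) ≤ f (a + ∑ i, g i) - f a := by
  rcases hsign with hg | hg
  · refine sum_le_of_superadditive_on_pred (fun x ↦ f (a + x) - f a) (0 ≤ ·) (by simp)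
      (fun x y hx hy ↦ ?_) (fun _ _ ↦ add_nonneg) g fun i _ ↦ hg i
    have := hf.map_add_add_map_add_le_of_nonneg (Set.mem_univ a) (Set.mem_univ _) hx hy
    rw [← add_assoc]; linarith
  · refine sum_le_of_superadditive_on_pred (fun x ↦ f (a + x) - f a) (· ≤ 0) (by simp)
      (fun x y hx hy ↦ ?_) (fun _ _ ↦ add_nonpos) g fun i _ ↦ hg i
    have := hf.map_add_add_map_add_le_of_nonpos (Set.mem_univ a) (Set.mem_univ _) hx hy
    rw [← add_assoc]; linarith
end

section
/- Let f(x) = Σ_{j=1}^n f_j(x_j) with each f_j : ℝ → ℝ convex. If x̄, x* ∈ S with f(x*) < f(x̄) and x* − x̄ = Σ_{i=1}^r λ_i g_i is a sign-compatible decomposition (λ_i ∈ ℤ_{>0}, g_i ⊑ x* − x̄, g_i ∈ Ker_ℤ(A)), then there exists an index i such that f(x̄ + λ_i g_i) < f(x̄) and x̄ + λ_i g_i ∈ S. -/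
/-!
Write `xstar - xbar = ∑ wᵢ` with `wᵢ = λᵢ gᵢ`. In every coordinate `j` the numbers `wᵢ j` share one
sign, so each `xbar j + wᵢ j` lies between `xbar j` and `xstar j`, which keeps `xbar + wᵢ` in the box,
and convexity of `f j` along that segment makes its increments superadditive:
`∑ᵢ (f j (xbar j + wᵢ j) - f j (xbar j)) ≤ f j (xstar j) - f j (xbar j)`. Summing over `j`,
the increments `F (xbar + wᵢ) - F xbar` add up to at most `F xstar - F xbar < 0`, so one of them
is negative; and `A wᵢ = 0` keeps `xbar + wᵢ` on `Ax = b`.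
-/

open Set

theorem mul_self_le_mul_sum_of_pairwise_mul_nonneg {ι α : Type*} [CommRing α] [PartialOrder α]
    [IsOrderedRing α] {s : Finset ι} {v : ι → α} (hv : ∀ i ∈ s, ∀ k ∈ s, 0 ≤ v i * v k)
    {i : ι} (hi : i ∈ s) : v i * v i ≤ v i * ∑ k ∈ s, v k := by
  rw [Finset.mul_sum]
  exact Finset.single_le_sum (hv i hi) hi

theorem add_mem_uIcc_of_pairwise_mul_nonneg {ι α : Type*} [CommRing α] [LinearOrder α]
    [IsStrictOrderedRing α] {s : Finset ι} {v : ι → α} (hv : ∀ i ∈ s, ∀ k ∈ s, 0 ≤ v i * v k)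
    {i : ι} (hi : i ∈ s) (p : α) : p + v i ∈ uIcc p (p + ∑ k ∈ s, v k) := by
  have hsq := mul_self_le_mul_sum_of_pairwise_mul_nonneg hv hi
  rcases lt_trichotomy (v i) 0 with hneg | hzero | hpos
  · exact mem_uIcc.2 (Or.inr ⟨by nlinarith, by linarith⟩)
  · simp [hzero]
  · exact mem_uIcc.2 (Or.inl ⟨by linarith, by nlinarith⟩)

theorem ConvexOn.sub_le_mul_sub {f : ℝ → ℝ} (hf : ConvexOn ℝ univ f) (p d : ℝ) {t : ℝ}
    (ht₀ : 0 ≤ t) (ht₁ : t ≤ 1) : f (p + t * d) - f p ≤ t * (f (p + d) - f p) := by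
  have h := hf.2 (mem_univ p) (mem_univ (p + d)) (sub_nonneg.2 ht₁) ht₀ (by ring)
  rw [smul_eq_mul, smul_eq_mul, smul_eq_mul, smul_eq_mul] at h
  calc f (p + t * d) - f p = f ((1 - t) * p + t * (p + d)) - f p := by ring_nf
    _ ≤ t * (f (p + d) - f p) := by linarith

theorem ConvexOn.sum_sub_le_of_pairwise_mul_nonneg {ι : Type*} {f : ℝ → ℝ}
    (hf : ConvexOn ℝ univ f) {s : Finset ι} {v : ι → ℝ}
    (hv : ∀ i ∈ s, ∀ k ∈ s, 0 ≤ v i * v k) (p : ℝ) :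
    ∑ i ∈ s, (f (p + v i) - f p) ≤ f (p + ∑ i ∈ s, v i) - f p := by
  set d := ∑ i ∈ s, v i
  have hsq : ∀ i ∈ s, v i * v i ≤ v i * d := fun i hi =>
    mul_self_le_mul_sum_of_pairwise_mul_nonneg hv hi
  rcases eq_or_ne d 0 with hd | hd
  · have hzero : ∀ i ∈ s, v i = 0 := fun i hi =>
      mul_self_eq_zero.1 (le_antisymm (by simpa [hd] using hsq i hi) (mul_self_nonneg _))
    rw [hd, add_zero, sub_self]
    exact (Finset.sum_eq_zero fun i hi => by rw [hzero i hi, add_zero, sub_self]).le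
  · -- `p + v i` is the point of weight `t i` on the segment `[p, p + d]`, and the `t i` sum to 1
    set t : ι → ℝ := fun i => v i / d
    have ht₀ : ∀ i ∈ s, 0 ≤ t i := fun i hi => by
      have : t i = v i * d / (d * d) := by simp only [t]; field_simp
      rw [this]; exact div_nonneg ((mul_self_nonneg _).trans (hsq i hi)) (mul_self_nonneg d)
    have ht_sum : ∑ i ∈ s, t i = 1 := by rw [← Finset.sum_div, div_self hd]
    have ht₁ : ∀ i ∈ s, t i ≤ 1 := fun i hi =>
      ht_sum ▸ Finset.single_le_sum ht₀ hi
    calc ∑ i ∈ s, (f (p + v i) - f p)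
        ≤ ∑ i ∈ s, t i * (f (p + d) - f p) := Finset.sum_le_sum fun i hi => by
          simpa [t, div_mul_cancel₀ _ hd] using hf.sub_le_mul_sub p d (ht₀ i hi) (ht₁ i hi)
      _ = f (p + d) - f p := by rw [← Finset.sum_mul, ht_sum, one_mul]

theorem sum_sub_le_of_separable_convex {ι κ : Type*} [Fintype κ] {f : κ → ℝ → ℝ}
    (hf : ∀ j, ConvexOn ℝ univ (f j)) {F : (κ → ℤ) → ℝ} (hF : ∀ x, F x = ∑ j, f j (x j))
    {s : Finset ι} {w : ι → κ → ℤ} (hw : ∀ j, ∀ i ∈ s, ∀ k ∈ s, 0 ≤ w i j * w k j)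
    (x : κ → ℤ) : ∑ i ∈ s, (F (x + w i) - F x) ≤ F (x + ∑ i ∈ s, w i) - F x := by
  simp only [hF, ← Finset.sum_sub_distrib]
  rw [Finset.sum_comm]
  refine Finset.sum_le_sum fun j _ => ?_
  have hwj : ∀ i ∈ s, ∀ k ∈ s, (0 : ℝ) ≤ (w i j : ℝ) * w k j := fun i hi k hk => by
    exact_mod_cast hw j i hi k hk
  simpa using (hf j).sum_sub_le_of_pairwise_mul_nonneg hwj (x j)

theorem mul_nonneg_of_mul_nonneg_of_abs_le {α : Type*} [CommRing α] [LinearOrder α]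
    [IsStrictOrderedRing α] {a b c : α} (ha : 0 ≤ a * c) (hb : 0 ≤ b * c) (hac : |a| ≤ |c|) :
    0 ≤ a * b := by
  rcases eq_or_ne c 0 with rfl | hc
  · simp [by simpa using hac]
  · have : 0 ≤ a * b * (c * c) := by
      rw [show a * b * (c * c) = a * c * (b * c) by ring]; exact mul_nonneg ha hb
    exact nonneg_of_mul_nonneg_left this (mul_self_pos.2 hc)

/-- For a separable convex objective, a sign-compatible decomposition of
`x* - x̄` with `f(x*) < f(x̄)` yields an augmenting step: some `x̄ + λᵢ gᵢ ∈ S`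
with smaller objective value. -/
theorem exists_augmenting_step (m n : ℕ) (A : Matrix (Fin m) (Fin n) ℤ)
    (b : Fin m → ℤ) (l u : Fin n → ℤ)
    (f : Fin n → ℝ → ℝ) (hf : ∀ j, ConvexOn ℝ Set.univ (f j))
    (F : (Fin n → ℤ) → ℝ) (hF : ∀ x, F x = ∑ j, f j (x j : ℝ))
    (xbar xstar : Fin n → ℤ)
    (hxbar : A.mulVec xbar = b ∧ ∀ i, l i ≤ xbar i ∧ xbar i ≤ u i)
    (hxstar : A.mulVec xstar = b ∧ ∀ i, l i ≤ xstar i ∧ xstar i ≤ u i)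
    (hlt : F xstar < F xbar)
    (r : ℕ) (lam : Fin r → ℤ) (hlam : ∀ i, 0 < lam i)
    (gs : Fin r → (Fin n → ℤ))
    (hker : ∀ i, A.mulVec (gs i) = 0)
    (hsq : ∀ i, ∀ j, 0 ≤ gs i j * (xstar - xbar) j ∧
      |gs i j| ≤ |(xstar - xbar) j|)
    (hdec : xstar - xbar = ∑ i, lam i • gs i) :
    ∃ i : Fin r, F (xbar + lam i • gs i) < F xbar ∧
      A.mulVec (xbar + lam i • gs i) = b ∧
      ∀ j, l j ≤ (xbar + lam i • gs i) j ∧ (xbar + lam i • gs i) j ≤ u j := by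
  have hxstar_eq : xbar + ∑ i, lam i • gs i = xstar := by rw [← hdec, add_sub_cancel]
  have hcompat : ∀ j, ∀ i ∈ Finset.univ, ∀ k ∈ Finset.univ,
      0 ≤ (lam i • gs i) j * (lam k • gs k) j :=
    fun j i _ k _ => by
      have hg := mul_nonneg_of_mul_nonneg_of_abs_le (hsq i j).1 (hsq k j).1 (hsq i j).2
      simpa only [Pi.smul_apply, smul_eq_mul, mul_mul_mul_comm] using
        mul_nonneg (mul_pos (hlam i) (hlam k)).le hg
  have hdescent := sum_sub_le_of_separable_convex hf hF hcompat xbar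
  rw [hxstar_eq] at hdescent
  obtain ⟨i, -, hi⟩ : ∃ i ∈ Finset.univ, F (xbar + lam i • gs i) - F xbar < 0 :=
    Finset.exists_lt_of_sum_lt (by simpa using hdescent.trans_lt (sub_neg.2 hlt))
  refine ⟨i, sub_neg.1 hi, by
    rw [Matrix.mulVec_add, Matrix.mulVec_smul, hxbar.1, hker, smul_zero, add_zero], ?_⟩
  intro j
  have hbox := uIcc_subset_Icc (hxbar.2 j) (by simpa [← hxstar_eq] using hxstar.2 j)
    (add_mem_uIcc_of_pairwise_mul_nonneg (hcompat j) (Finset.mem_univ i) (xbar j))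
  simpa [Finset.sum_apply] using hbox
end

section
/- If the bounds are finite (l, u ∈ ℤ^n with l ≤ u), then Ker_ℤ(A) ∩ [l−u, u−l] is a finite test set for model min{f(x) : x ∈ S} whenever G(A) is: for any non-optimal x̄ ∈ S there exist g ∈ Ker_ℤ(A) ∩ [l−u, u−l] and λ ∈ ℤ_{>0} with x̄ + λg ∈ S and f(x̄+λg) < f(x̄); in particular G(A) ⊆ Ker_ℤ(A) ∩ [l−u, u−l]. -/
/-- With finite bounds `l ≤ u`, the set `Ker_ℤ(A) ∩ [l-u, u-l]` is a finite
test set for separable convex minimization over `S`, and every `g ∈ Ker_ℤ(A)`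
that is `⊑`-below a difference of two points of `S` lies in the box
`[l-u, u-l]` (in particular the relevant Graver elements do). -/
theorem box_test_set (m n : ℕ) (A : Matrix (Fin m) (Fin n) ℤ)
    (b : Fin m → ℤ) (l u : Fin n → ℤ) (hlu : ∀ i, l i ≤ u i)
    (f : Fin n → ℝ → ℝ) (hf : ∀ j, ConvexOn ℝ Set.univ (f j))
    (F : (Fin n → ℤ) → ℝ) (hF : ∀ x, F x = ∑ j, f j (x j : ℝ)) :
    -- finiteness of the box test set
    {g : Fin n → ℤ | A.mulVec g = 0 ∧
      ∀ i, l i - u i ≤ g i ∧ g i ≤ u i - l i}.Finite ∧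
    -- test set property
    (∀ xbar : Fin n → ℤ,
      (A.mulVec xbar = b ∧ ∀ i, l i ≤ xbar i ∧ xbar i ≤ u i) →
      (∃ x : Fin n → ℤ,
        (A.mulVec x = b ∧ ∀ i, l i ≤ x i ∧ x i ≤ u i) ∧ F x < F xbar) →
      ∃ (g : Fin n → ℤ) (lam : ℤ),
        (A.mulVec g = 0 ∧ ∀ i, l i - u i ≤ g i ∧ g i ≤ u i - l i) ∧
        0 < lam ∧
        (A.mulVec (xbar + lam • g) = b ∧
          ∀ i, l i ≤ (xbar + lam • g) i ∧ (xbar + lam • g) i ≤ u i) ∧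
        F (xbar + lam • g) < F xbar) ∧
    -- every ⊑-minimal summand of a difference of two points of S is in the box
    (∀ g x y : Fin n → ℤ,
      (A.mulVec x = b ∧ ∀ i, l i ≤ x i ∧ x i ≤ u i) →
      (A.mulVec y = b ∧ ∀ i, l i ≤ y i ∧ y i ≤ u i) →
      (∀ i, 0 ≤ g i * (x - y) i ∧ |g i| ≤ |(x - y) i|) →
      ∀ i, l i - u i ≤ g i ∧ g i ≤ u i - l i) := by
  refine ⟨?_, ?_, ?_⟩
  · apply Set.Finite.subset (Set.Finite.pi (fun i => Set.finite_Icc (l i - u i) (u i - l i)))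
    intro g hg
    simp only [Set.mem_pi, Set.mem_univ, Set.mem_Icc, forall_true_left]
    exact fun i => hg.2 i
  · rintro xbar ⟨hxA, hxb⟩ ⟨x, ⟨hA, hb⟩, hlt⟩
    refine ⟨x - xbar, 1, ⟨?_, ?_⟩, one_pos, ?_, ?_⟩
    · rw [A.mulVec_sub, hA, hxA, sub_self]
    · intro i
      have h1 := hb i; have h2 := hxb i
      constructor <;> simp [sub_eq_add_neg] <;> omega
    · have : xbar + (1 : ℤ) • (x - xbar) = x := by ext i; simp
      rw [this]; exact ⟨hA, hb⟩
    · have : xbar + (1 : ℤ) • (x - xbar) = x := by ext i; simp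
      rw [this]; exact hlt
  · rintro g x y ⟨_, hx⟩ ⟨_, hy⟩ hg i
    have h1 := hx i; have h2 := hy i
    have h3 := (hg i).2
    have : |(x - y) i| ≤ u i - l i := by
      rw [Pi.sub_apply, abs_le]; omega
    have := h3.trans this
    rw [abs_le] at this
    omega
end
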